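/- For every ribbon graph 𝔾, with 𝒱 the vertex colouring that assigns a unique colour to each vertex, the Bollobás–Riordan polynomial satisfies R_𝔾(x, y, z) = (y·z²)^{γ(𝔾)/2} · T_cps(𝔾; x−1, 1/(y·z²), y). -/
import Mathlib


open scoped BigOperators

/-- The five types of connected one-edge coloured ribbon graphs:
`bs` (a bridge whose two vertices lie in distinct colour classes),
`bp` (a bridge whose two vertices share a colour class),
`olc` (an orientable loop whose two boundary components lie in distinct colour classes),
`olh` (an orientable loop whose two boundary components share a colour class), and
`nl` (a non-orientable loop). -/
inductive RGType : Type
  | bs | bp | olc | olh | nl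
deriving DecidableEq

/-- The three types of connected one-edge ribbon graphs: `b` (a bridge),
`ol` (an orientable loop) and `nl` (a non-orientable loop). -/
inductive RGTypeU : Type
  | b | ol | nl
deriving DecidableEq

/-- An abstract interface for coloured ribbon graphs.  An object of the theory is a
coloured ribbon graph: a ribbon graph (a surface with boundary presented as a union of
vertex discs and edge discs) equipped with a vertex colouring (a partition of its
vertex set) and a boundary colouring (a partition of its set of boundary components).
The structure records, for each object, its edge set and the numerical invariants of
its spanning (ribbon) subgraphs used in the paper, together with edge deletion, edge
contraction, geometric duality and partial duality, and the basic compatibilities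
between the operations and the invariants. -/
structure RibbonTheory where
  /-- the type of coloured ribbon graphs -/
  Obj : Type
  /-- the edge set of a coloured ribbon graph (edges are labelled by naturals) -/
  E : Obj → Finset ℕ
  /-- the number of vertices -/
  nV : Obj → ℕ
  /-- `k G A` is the number of connected components of the spanning subgraph `(V, A)`
  of the underlying graph of `G` -/
  k : Obj → Finset ℕ → ℕ
  /-- `bd G A` is the number of boundary components of the spanning ribbon
  subgraph `(V, A)` of `G` -/
  bd : Obj → Finset ℕ → ℕ
  /-- the number of vertex colour classes -/
  nVC : Obj → ℕ
  /-- `kV G A` is the number of connected components of the spanning subgraph with edge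
  set `A` of the abstract graph `𝔾/𝒱` on the vertex colour classes -/
  kV : Obj → Finset ℕ → ℕ
  /-- the number of boundary colour classes -/
  nBC : Obj → ℕ
  /-- `kB G A` is the number of connected components of the spanning subgraph with edge
  set `A` of the abstract graph `𝔾*/ℬ` on the boundary colour classes -/
  kB : Obj → Finset ℕ → ℕ
  /-- deletion of an edge -/
  del : Obj → ℕ → Obj
  /-- contraction of an edge -/
  con : Obj → ℕ → Obj
  /-- the geometric dual, with the vertex colouring induced from the boundary colouring
  and the boundary colouring induced from the vertex colouring -/
  dual : Obj → Obj
  /-- simultaneous deletion of a set of edges -/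
  delSet : Obj → Finset ℕ → Obj
  /-- simultaneous contraction of a set of edges -/
  conSet : Obj → Finset ℕ → Obj
  /-- `pdual G A` is the partial dual of `G` with respect to the edge set `A` -/
  pdual : Obj → Finset ℕ → Obj
  /-- in a one-vertex ribbon graph, two edges are interlaced if their ends occur in
  cyclic order `e, f, e, f` around the vertex -/
  interlaced : Obj → ℕ → ℕ → Prop
  /-- `consistent H S i`: in the one-vertex ribbon graph `H`, relative to the ribbon
  subgraph on the edge set `S` (with its boundary components arbitrarily oriented as
  closed curves on `H`), the boundary of the edge `i` intersects exactly one of the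
  oriented curves and the directed arcs of intersection are consistent with some
  orientation of the boundary of `i` -/
  consistent : Obj → Finset ℕ → ℕ → Prop
  /-- `inconsistent H S i`: as in `consistent`, but the directed arcs of intersection
  are inconsistent with every orientation of the boundary of `i` -/
  inconsistent : Obj → Finset ℕ → ℕ → Prop
  del_E : ∀ G e, e ∈ E G → E (del G e) = (E G).erase e
  con_E : ∀ G e, e ∈ E G → E (con G e) = (E G).erase e
  dual_E : ∀ G, E (dual G) = E G
  pdual_E : ∀ G A, E (pdual G A) = E G
  del_nV : ∀ G e, nV (del G e) = nV G
  del_k : ∀ G e A, A ⊆ (E G).erase e → k (del G e) A = k G A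
  del_bd : ∀ G e A, A ⊆ (E G).erase e → bd (del G e) A = bd G A
  del_nVC : ∀ G e, nVC (del G e) = nVC G
  del_kV : ∀ G e A, A ⊆ (E G).erase e → kV (del G e) A = kV G A
  del_nBC : ∀ G e, e ∈ E G → nBC (del G e) = kB G {e}
  del_kB : ∀ G e A, e ∈ E G → A ⊆ (E G).erase e → kB (del G e) A = kB G (insert e A)
  con_bd : ∀ G e A, e ∈ E G → A ⊆ (E G).erase e → bd (con G e) A = bd G (insert e A)
  con_k : ∀ G e A, e ∈ E G → A ⊆ (E G).erase e → k G {e} ≠ nV G →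
      k (con G e) A = k G (insert e A)
  con_nVC : ∀ G e, e ∈ E G → nVC (con G e) = kV G {e}
  con_kV : ∀ G e A, e ∈ E G → A ⊆ (E G).erase e → kV (con G e) A = kV G (insert e A)
  con_nBC : ∀ G e, nBC (con G e) = nBC G
  con_kB : ∀ G e A, A ⊆ (E G).erase e → kB (con G e) A = kB G A
  dual_nV : ∀ G, nV (dual G) = bd G (E G)
  dual_nVC : ∀ G, nVC (dual G) = nBC G
  dual_kV : ∀ G A, kV (dual G) A = kB G A
  dual_nBC : ∀ G, nBC (dual G) = nVC G
  dual_kB : ∀ G A, kB (dual G) A = kV G A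
  delSet_empty : ∀ G, delSet G ∅ = G
  delSet_insert : ∀ G e A, e ∈ E G → e ∉ A → delSet G (insert e A) = delSet (del G e) A
  conSet_empty : ∀ G, conSet G ∅ = G
  conSet_insert : ∀ G e A, e ∈ E G → e ∉ A → conSet G (insert e A) = conSet (con G e) A

namespace RibbonTheory

variable (T : RibbonTheory)

/-- `e` is a loop of `G`: it is incident with exactly one vertex. -/
def IsLoop (G : T.Obj) (e : ℕ) : Prop := T.k G {e} = T.nV G

/-- `e` is an orientable loop of `G`. -/
def IsOrLoop (G : T.Obj) (e : ℕ) : Prop := T.IsLoop G e ∧ T.bd G {e} = T.nV G + 1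

/-- `e` is a non-orientable loop of `G`: together with its incident vertex it forms a
Möbius band. -/
def IsNonorLoop (G : T.Obj) (e : ℕ) : Prop := T.IsLoop G e ∧ T.bd G {e} = T.nV G

/-- `e` is a bridge of `G`: its deletion increases the number of components. -/
def IsBridge (G : T.Obj) (e : ℕ) : Prop :=
  T.k G ((T.E G).erase e) = T.k G (T.E G) + 1

/-- `e` is an orientable doop of `G`: the corresponding edge of the geometric dual is
an orientable loop, i.e. deleting `e` splits the boundary component it touches. -/
def IsOrDoop (G : T.Obj) (e : ℕ) : Prop :=
  T.bd G ((T.E G).erase e) = T.bd G (T.E G) + 1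

/-- `e` is a non-orientable doop of `G`. -/
def IsNonorDoop (G : T.Obj) (e : ℕ) : Prop :=
  T.bd G ((T.E G).erase e) = T.bd G (T.E G)

/-- `e` is a doop of `G`: the corresponding edge of the geometric dual is a loop. -/
def IsDoop (G : T.Obj) (e : ℕ) : Prop := T.IsOrDoop G e ∨ T.IsNonorDoop G e

/-- `e` is a loop in the abstract graph `𝔾/𝒱`. -/
def IsLoopV (G : T.Obj) (e : ℕ) : Prop := T.kV G {e} = T.nVC G

/-- `e` is a bridge in the abstract graph `𝔾/𝒱`. -/
def IsBridgeV (G : T.Obj) (e : ℕ) : Prop :=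
  T.kV G ((T.E G).erase e) = T.kV G (T.E G) + 1

/-- `e` is a loop in the abstract graph `𝔾*/ℬ`. -/
def IsLoopB (G : T.Obj) (e : ℕ) : Prop := T.kB G {e} = T.nBC G

/-- `e` is a bridge in the abstract graph `𝔾*/ℬ`. -/
def IsBridgeB (G : T.Obj) (e : ℕ) : Prop :=
  T.kB G ((T.E G).erase e) = T.kB G (T.E G) + 1

/-- `G` is connected. -/
def Connected (G : T.Obj) : Prop := T.k G (T.E G) = 1

/-- `𝔾/eᶜ`: the result of contracting every edge other than `e`. -/
def contractComplement (G : T.Obj) (e : ℕ) : T.Obj := T.conSet G ((T.E G).erase e)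

/-- `𝔾∖eᶜ`: the result of deleting every edge other than `e`. -/
def deleteComplement (G : T.Obj) (e : ℕ) : T.Obj := T.delSet G ((T.E G).erase e)

/-- `H`, after disregarding isolated vertices, is the one-edge coloured ribbon graph of
type `t ∈ {bs, bp, olc, olh, nl}`. -/
def IsOne (H : T.Obj) : RGType → Prop
  | .bs => ∃ e, T.E H = {e} ∧ ¬ T.IsLoop H e ∧ ¬ T.IsLoopV H e
  | .bp => ∃ e, T.E H = {e} ∧ ¬ T.IsLoop H e ∧ T.IsLoopV H e
  | .olc => ∃ e, T.E H = {e} ∧ T.IsOrLoop H e ∧ ¬ T.IsLoopB H e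
  | .olh => ∃ e, T.E H = {e} ∧ T.IsOrLoop H e ∧ T.IsLoopB H e
  | .nl => ∃ e, T.E H = {e} ∧ T.IsNonorLoop H e

/-- `H`, after disregarding isolated vertices, is the one-edge ribbon graph of type
`t ∈ {b, ol, nl}`. -/
def IsOneU (H : T.Obj) : RGTypeU → Prop
  | .b => ∃ e, T.E H = {e} ∧ ¬ T.IsLoop H e
  | .ol => ∃ e, T.E H = {e} ∧ T.IsOrLoop H e
  | .nl => ∃ e, T.E H = {e} ∧ T.IsNonorLoop H e

/-- The edge `e` of the coloured ribbon graph `G` is of type `(i, j)`: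
`(𝔾/eᶜ, 𝔾∖eᶜ) = (i, j)` after disregarding isolated vertices. -/
def EdgeType (G : T.Obj) (e : ℕ) (i j : RGType) : Prop :=
  T.IsOne (T.contractComplement G e) i ∧ T.IsOne (T.deleteComplement G e) j

/-- The edge `e` of the ribbon graph `G` is of type `(i, j)` for
`i, j ∈ {b, ol, nl}`. -/
def EdgeTypeU (G : T.Obj) (e : ℕ) (i j : RGTypeU) : Prop :=
  T.IsOneU (T.contractComplement G e) i ∧ T.IsOneU (T.deleteComplement G e) j

/-- the rank `r(A) = |V| - k(A)` of the spanning subgraph `(V, A)` -/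
def r (G : T.Obj) (A : Finset ℕ) : ℤ := (T.nV G : ℤ) - T.k G A

/-- `ρ(A) = r(A) + γ(A)/2 = (|A| + |V| - b(A))/2` -/
def rho (G : T.Obj) (A : Finset ℕ) : ℚ :=
  ((A.card : ℚ) + (T.nV G : ℚ) - (T.bd G A : ℚ)) / 2

/-- the Euler genus `γ(A) = 2k(A) - |V| + |A| - b(A)` of the spanning ribbon
subgraph `(V, A)` -/
def eg (G : T.Obj) (A : Finset ℕ) : ℤ :=
  2 * (T.k G A : ℤ) - (T.nV G : ℤ) + (A.card : ℤ) - (T.bd G A : ℤ)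

/-- `r₁(A) = r_{𝔾/𝒱}(A)` -/
def r1 (G : T.Obj) (A : Finset ℕ) : ℤ := (T.nVC G : ℤ) - T.kV G A

/-- the rank function `r_{𝔾*/ℬ}` -/
def rB (G : T.Obj) (A : Finset ℕ) : ℤ := (T.nBC G : ℤ) - T.kB G A

/-- `r₂(A) = ρ(A) - r_{𝔾/𝒱}(A)` -/
def r2 (G : T.Obj) (A : Finset ℕ) : ℚ := T.rho G A - (T.r1 G A : ℚ)

/-- `r₃(A) = r_{𝔾*/ℬ}(E) - r_{𝔾*/ℬ}(Aᶜ)` -/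
def r3 (G : T.Obj) (A : Finset ℕ) : ℤ := T.rB G (T.E G) - T.rB G (T.E G \ A)

/-- `r₄(A) = |A| + r_{𝔾*/ℬ}(Aᶜ) - r_{𝔾*/ℬ}(E) - ρ(A)` -/
def r4 (G : T.Obj) (A : Finset ℕ) : ℚ :=
  (A.card : ℚ) + (T.rB G (T.E G \ A) : ℚ) - (T.rB G (T.E G) : ℚ) - T.rho G A

/-- The Tutte polynomial of a coloured ribbon graph (the Tutte polynomial of graphs in
pseudo-surfaces), `T_ps(𝔾; w, x, y, z) = Σ_{A⊆E} w^{r₁(E)-r₁(A)} x^{r₂(E)-r₂(A)}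
y^{r₃(A)} z^{r₄(A)}`, evaluated at real arguments. -/
noncomputable def Tps (G : T.Obj) (w x y z : ℝ) : ℝ :=
  ∑ A ∈ (T.E G).powerset,
    w ^ (((T.r1 G (T.E G) - T.r1 G A : ℤ) : ℝ)) *
    x ^ (((T.r2 G (T.E G) - T.r2 G A : ℚ) : ℝ)) *
    y ^ ((T.r3 G A : ℝ)) *
    z ^ ((T.r4 G A : ℝ))

/-- The Tutte polynomial of a ribbon graph (the Tutte polynomial of graphs cellularly
embedded in surfaces), `T_cs(𝔾; x, y) = Σ_{A⊆E} x^{ρ(𝔾)-ρ(A)} y^{|A|-ρ(A)}`. -/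
noncomputable def Tcs (G : T.Obj) (x y : ℝ) : ℝ :=
  ∑ A ∈ (T.E G).powerset,
    x ^ (((T.rho G (T.E G) - T.rho G A : ℚ) : ℝ)) *
    y ^ ((((A.card : ℚ) - T.rho G A : ℚ) : ℝ))

/-- The Tutte polynomial of a boundary coloured ribbon graph (the Tutte polynomial of
graphs embedded in surfaces), `T_s(𝔾; x, y, z) = Σ_{A⊆E} x^{ρ(E)-ρ(A)} y^{r₃(A)}
z^{r₄(A)}`. -/
noncomputable def Ts (G : T.Obj) (x y z : ℝ) : ℝ :=
  ∑ A ∈ (T.E G).powerset,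
    x ^ (((T.rho G (T.E G) - T.rho G A : ℚ) : ℝ)) *
    y ^ ((T.r3 G A : ℝ)) *
    z ^ ((T.r4 G A : ℝ))

/-- The Tutte polynomial of a vertex coloured ribbon graph (the Tutte polynomial of
graphs cellularly embedded in pseudo-surfaces), `T_cps(𝔾; w, x, y) = Σ_{A⊆E}
w^{r₁(E)-r₁(A)} x^{r₂(E)-r₂(A)} y^{|A|-ρ(A)}`. -/
noncomputable def Tcps (G : T.Obj) (w x y : ℝ) : ℝ :=
  ∑ A ∈ (T.E G).powerset,
    w ^ (((T.r1 G (T.E G) - T.r1 G A : ℤ) : ℝ)) *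
    x ^ (((T.r2 G (T.E G) - T.r2 G A : ℚ) : ℝ)) *
    y ^ ((((A.card : ℚ) - T.rho G A : ℚ) : ℝ))

/-- The polynomial `P(𝔾) = Σ_{A⊆E} b_bs^{r₁(A)} b_bp^{r₂(A)} b_olc^{r₃(A)}
b_olh^{r₄(A)}`, the specialisation of `U` at `α = β = γ = 1` and
`a_bs = a_bp = a_olc = a_olh = 1`. -/
noncomputable def P (G : T.Obj) (bbs bbp bolc bolh : ℝ) : ℝ :=
  ∑ A ∈ (T.E G).powerset,
    bbs ^ ((T.r1 G A : ℝ)) *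
    bbp ^ ((T.r2 G A : ℝ)) *
    bolc ^ ((T.r3 G A : ℝ)) *
    bolh ^ ((T.r4 G A : ℝ))

/-- The coefficients `a_bs, a_bp, a_olc, a_olh, a_nl` in the polynomial ring
`ℤ[α, β, γ, a_bs, a_bp^{1/2}, a_olc, a_olh^{1/2}, b_bs, b_bp^{1/2}, b_olc, b_olh^{1/2}]`
(the variables `X 0, …, X 10` are `α, β, γ, a_bs, a_bp^{1/2}, a_olc, a_olh^{1/2},
b_bs, b_bp^{1/2}, b_olc, b_olh^{1/2}` respectively); here
`a_nl = a_bp^{1/2} a_olh^{1/2}`. -/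
noncomputable def aCoef : RGType → MvPolynomial (Fin 11) ℤ
  | .bs => MvPolynomial.X 3
  | .bp => MvPolynomial.X 4 ^ 2
  | .olc => MvPolynomial.X 5
  | .olh => MvPolynomial.X 6 ^ 2
  | .nl => MvPolynomial.X 4 * MvPolynomial.X 6

/-- The coefficients `b_bs, b_bp, b_olc, b_olh, b_nl = b_bp^{1/2} b_olh^{1/2}`. -/
noncomputable def bCoef : RGType → MvPolynomial (Fin 11) ℤ
  | .bs => MvPolynomial.X 7
  | .bp => MvPolynomial.X 8 ^ 2
  | .olc => MvPolynomial.X 9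
  | .olh => MvPolynomial.X 10 ^ 2
  | .nl => MvPolynomial.X 8 * MvPolynomial.X 10

/-- The deletion–contraction recursion for `U` on a class `𝒢` of coloured ribbon
graphs: `U(𝔾) = a_i U(𝔾∖e) + b_j U(𝔾/e)` if `e` is of type `(i,j)`, and
`U(𝔾) = α^n β^m γ^v` if `𝔾` is edgeless with `v` vertices, `n` vertex colour classes
and `m` boundary colour classes. -/
def URecOn (𝒢 : Set T.Obj) (U : T.Obj → MvPolynomial (Fin 11) ℤ) : Prop :=
  (∀ G ∈ 𝒢, ∀ e ∈ T.E G, ∀ i j, T.EdgeType G e i j →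
      U G = aCoef i * U (T.del G e) + bCoef j * U (T.con G e)) ∧
  (∀ G ∈ 𝒢, T.E G = ∅ →
      U G = MvPolynomial.X 0 ^ T.nVC G * MvPolynomial.X 1 ^ T.nBC G *
        MvPolynomial.X 2 ^ T.nV G)

/-- The real coefficients `a_bs, a_bp, a_olc, a_olh` indexed by the one-edge types,
with `a_nl = a_bp^{1/2} a_olh^{1/2}`. -/
noncomputable def aR (abs abp aolc aolh : ℝ) : RGType → ℝ
  | .bs => abs
  | .bp => abp
  | .olc => aolc
  | .olh => aolh
  | .nl => Real.sqrt (abp * aolh)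

/-- The real-valued deletion–contraction recursion for `U` on a class `𝒢`, with the
variables `α, β, γ, a_bs, a_bp, a_olc, a_olh, b_bs, b_bp, b_olc, b_olh` evaluated at
real numbers. -/
noncomputable def URecROn (𝒢 : Set T.Obj)
    (α β γ abs abp aolc aolh bbs bbp bolc bolh : ℝ) (U : T.Obj → ℝ) : Prop :=
  (∀ G ∈ 𝒢, ∀ e ∈ T.E G, ∀ i j, T.EdgeType G e i j →
      U G = aR abs abp aolc aolh i * U (T.del G e) +
        aR bbs bbp bolc bolh j * U (T.con G e)) ∧
  (∀ G ∈ 𝒢, T.E G = ∅ → U G = α ^ T.nVC G * β ^ T.nBC G * γ ^ T.nV G)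

end RibbonTheory

/-- For every ribbon graph `𝔾`, with `𝒱` the vertex colouring that
assigns a unique colour to each vertex (recorded by the hypotheses `hnVC` and `hkV`,
so that `𝔾/𝒱` is the underlying graph of `𝔾`), the Bollobás–Riordan polynomial
`R_𝔾(x,y,z) = Σ_{A⊆E} (x−1)^{r(E)−r(A)} y^{|A|−r(A)} z^{γ(A)}` satisfies
`R_𝔾(x, y, z) = (y·z²)^{γ(𝔾)/2} · T_cps(𝔾; x−1, 1/(y·z²), y)`. -/
theorem BR_eq_Tcps (T : RibbonTheory) (G : T.Obj)
    (hnVC : T.nVC G = T.nV G) (hkV : ∀ A, T.kV G A = T.k G A)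
    (x y z : ℝ) (hx : 1 < x) (hy : 0 < y) (hz : 0 < z) :
    (∑ A ∈ (T.E G).powerset,
        (x - 1) ^ (((T.r G (T.E G) - T.r G A : ℤ)) : ℝ) *
        y ^ ((((A.card : ℚ) - (T.r G A : ℚ) : ℚ)) : ℝ) *
        z ^ ((T.eg G A : ℝ))) =
      (y * z ^ 2) ^ ((((T.eg G (T.E G) : ℚ) / 2 : ℚ)) : ℝ) *
        T.Tcps G (x - 1) (1 / (y * z ^ 2)) y := by
  rw [RibbonTheory.Tcps, Finset.mul_sum]
  refine Finset.sum_congr rfl fun A hA => ?_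
  have hw : (0:ℝ) < y * z ^ 2 := by positivity
  have hx' : (0:ℝ) < x - 1 := by linarith
  have hr1 : ∀ B, T.r1 G B = T.r G B := fun B => by
    simp [RibbonTheory.r1, RibbonTheory.r, hnVC, hkV]
  have hr2 : (T.r2 G (T.E G) - T.r2 G A : ℚ)
      = (T.eg G (T.E G) : ℚ)/2 - (T.eg G A : ℚ)/2 := by
    simp only [RibbonTheory.r2, RibbonTheory.rho, RibbonTheory.eg, hr1, RibbonTheory.r]
    push_cast
    ring
  have hyexp : ((A.card : ℚ) - (T.r G A : ℚ))
      = (T.eg G A : ℚ)/2 + ((A.card : ℚ) - T.rho G A) := by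
    simp only [RibbonTheory.rho, RibbonTheory.eg, RibbonTheory.r]
    push_cast; ring
  simp only [hr1]
  simp only [Real.rpow_def_of_pos hx', Real.rpow_def_of_pos hy,
    Real.rpow_def_of_pos hz, Real.rpow_def_of_pos hw,
    Real.rpow_def_of_pos (x := 1/(y*z^2)) (by positivity), ← Real.exp_add]
  rw [Real.exp_eq_exp]
  have hlw : Real.log (y * z ^ 2) = Real.log y + 2 * Real.log z := by
    rw [Real.log_mul hy.ne' (by positivity), Real.log_pow]; push_cast; ring
  have hlw' : Real.log (1/(y * z ^ 2)) = -(Real.log y + 2 * Real.log z) := by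
    rw [one_div, Real.log_inv, hlw]
  rw [hlw, hlw']
  have hr2R : (((T.r2 G (T.E G) - T.r2 G A : ℚ)) : ℝ)
      = ((T.eg G (T.E G) : ℤ) : ℝ)/2 - ((T.eg G A : ℤ) : ℝ)/2 := by
    exact_mod_cast congrArg (fun q : ℚ => (q : ℝ)) hr2
  have hyR : ((((A.card : ℚ) - (T.r G A : ℚ) : ℚ)) : ℝ)
      = ((T.eg G A : ℤ) : ℝ)/2 + ((((A.card : ℚ) - T.rho G A : ℚ)) : ℝ) := by
    exact_mod_cast congrArg (fun q : ℚ => (q : ℝ)) hyexp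
  have haR : ((((T.eg G (T.E G) : ℚ) / 2 : ℚ)) : ℝ) = ((T.eg G (T.E G) : ℤ) : ℝ)/2 := by
    push_cast; ring
  rw [hyR, hr2R, haR]
  ring
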